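/- For the Dirac operator (D̸ψ)_β = (i/(2√2))((σ¹ψ_α + ψ_α σ²)(σ¹)^α{}_β + ε'(ψ_α σ¹ + σ²ψ_α)(σ³)^α{}_β) with ε' = ±1 acting on pairs ψ = (ψ₁,ψ₂) of 2×2 complex matrices, one has (D̸²ψ)_β = -(1/2)ψ_β - (1/4)(σ¹ψ_β σ² + σ²ψ_β σ¹) + (ε'/4){σ³, ψ_α}(σ²)^α{}_β. -/

import Mathlib

/-!
Write `D̸ = c (A ⊗ σ¹ᵀ + ε' B ⊗ σ³ᵀ)` with `A X = σ¹X + Xσ²`, `B X = σ²X + Xσ¹` and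
`c = i/(2√2)`, so `c² = -1/8`. On squaring, `(σ¹)² = (σ³)² = ε'² = 1` leave `A² + B²` on the
diagonal, which is `4 + 2(σ¹ · σ² + σ² · σ¹)`. Since `σ³σ¹ = -σ¹σ³ = iσ²`, the cross terms combine
into `ε' [A, B] ⊗ (iσ²)ᵀ`, and `[A, B] X = [σ¹, σ²] X + X [σ¹, σ²] = 2i {σ³, X}`.
-/

open Matrix Complex

noncomputable def pauli1 : Matrix (Fin 2) (Fin 2) ℂ := !![0, 1; 1, 0]
noncomputable def pauli2 : Matrix (Fin 2) (Fin 2) ℂ := !![0, -Complex.I; Complex.I, 0]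
noncomputable def pauli3 : Matrix (Fin 2) (Fin 2) ℂ := !![1, 0; 0, -1]

/-- The geometric Dirac operator on `M₂(ℂ) ⊗ ℂ²`:
`(D̸ψ)_β = (i/(2√2))((σ¹ψ_α + ψ_ασ²)(σ¹)^α_β + ε'(ψ_ασ¹ + σ²ψ_α)(σ³)^α_β)`. -/
noncomputable def Dirac (ε' : ℂ) (ψ : Fin 2 → Matrix (Fin 2) (Fin 2) ℂ) :
    Fin 2 → Matrix (Fin 2) (Fin 2) ℂ :=
  fun β => (Complex.I / (2 * (Real.sqrt 2 : ℂ))) •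
    ∑ α : Fin 2,
      ((pauli1 α β) • (pauli1 * ψ α + ψ α * pauli2) +
        (ε' * pauli3 α β) • (ψ α * pauli1 + pauli2 * ψ α))

section KronEnd

variable {R M ι : Type*} [CommSemiring R] [AddCommMonoid M] [Module R M] [Fintype ι]

/-- `kronEnd P A` is `A ⊗ Pᵀ` on `M ⊗ Rᶥ ≃ ι → M`; the transpose matches the index placement
`P^α_β` of the spinor matrices. -/
def kronEnd (P : Matrix ι ι R) (A : Module.End R M) : Module.End R (ι → M) where
  toFun ψ β := ∑ α, P α β • A (ψ α)
  map_add' ψ φ := by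
    ext β
    simp only [Pi.add_apply, map_add, smul_add, Finset.sum_add_distrib]
  map_smul' c ψ := by
    ext β
    simp only [Pi.smul_apply, map_smul, smul_comm (P _ β) c, Finset.smul_sum, RingHom.id_apply]

@[simp]
theorem kronEnd_apply (P : Matrix ι ι R) (A : Module.End R M) (ψ : ι → M) (β : ι) :
    kronEnd P A ψ β = ∑ α, P α β • A (ψ α) :=
  rfl

theorem kronEnd_mul (P Q : Matrix ι ι R) (A B : Module.End R M) :
    kronEnd P A * kronEnd Q B = kronEnd (Q * P) (A * B) := by
  ext ψ β
  simp only [Module.End.mul_apply, kronEnd_apply, map_sum, map_smul, Finset.smul_sum, smul_smul,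
    Matrix.mul_apply, Finset.sum_smul]
  rw [Finset.sum_comm]
  simp only [mul_comm]

theorem kronEnd_one_apply [DecidableEq ι] (A : Module.End R M) (ψ : ι → M) (β : ι) :
    kronEnd 1 A ψ β = A (ψ β) := by
  simp [Matrix.one_apply]

theorem kronEnd_add_right (P : Matrix ι ι R) (A B : Module.End R M) :
    kronEnd P (A + B) = kronEnd P A + kronEnd P B := by
  ext ψ β
  simp [Finset.sum_add_distrib]

theorem kronEnd_smul_left (c : R) (P : Matrix ι ι R) (A : Module.End R M) :
    kronEnd (c • P) A = c • kronEnd P A := by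
  ext ψ β
  simp [Finset.smul_sum, smul_smul]

theorem kronEnd_smul_right (c : R) (P : Matrix ι ι R) (A : Module.End R M) :
    kronEnd P (c • A) = c • kronEnd P A := by
  ext ψ β
  simp [Finset.smul_sum, smul_comm c]

end KronEnd

theorem kronEnd_sub_right {R M ι : Type*} [CommRing R] [AddCommGroup M] [Module R M] [Fintype ι]
    (P : Matrix ι ι R) (A B : Module.End R M) :
    kronEnd P (A - B) = kronEnd P A - kronEnd P B := by
  ext ψ β
  simp [Finset.sum_sub_distrib, smul_sub]

section MulLeftAddMulRight

variable (R : Type*) {A : Type*} [CommSemiring R] [Semiring A] [Algebra R A]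

def mulLeftAddMulRight (a b : A) : Module.End R A :=
  LinearMap.mulLeft R a + LinearMap.mulRight R b

@[simp]
theorem mulLeftAddMulRight_apply (a b x : A) :
    mulLeftAddMulRight R a b x = a * x + x * b :=
  rfl

theorem mulLeftAddMulRight_mul_apply (a b c d x : A) :
    (mulLeftAddMulRight R a b * mulLeftAddMulRight R c d) x =
      a * c * x + a * x * d + c * x * b + x * (d * b) := by
  simp only [Module.End.mul_apply, mulLeftAddMulRight_apply, mul_add, add_mul, mul_assoc]
  abel

end MulLeftAddMulRight

section Pauli

theorem pauli1_mul_pauli1 : pauli1 * pauli1 = 1 := by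
  ext i j; fin_cases i <;> fin_cases j <;> simp [pauli1, Matrix.mul_apply]

theorem pauli2_mul_pauli2 : pauli2 * pauli2 = 1 := by
  ext i j; fin_cases i <;> fin_cases j <;> simp [pauli2, Matrix.mul_apply]

theorem pauli3_mul_pauli3 : pauli3 * pauli3 = 1 := by
  ext i j; fin_cases i <;> fin_cases j <;> simp [pauli3, Matrix.mul_apply]

theorem pauli1_mul_pauli2 : pauli1 * pauli2 = I • pauli3 := by
  ext i j; fin_cases i <;> fin_cases j <;> simp [pauli1, pauli2, pauli3, Matrix.mul_apply]

theorem pauli2_mul_pauli1 : pauli2 * pauli1 = -(I • pauli3) := by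
  ext i j; fin_cases i <;> fin_cases j <;> simp [pauli1, pauli2, pauli3, Matrix.mul_apply]

theorem pauli3_mul_pauli1 : pauli3 * pauli1 = I • pauli2 := by
  ext i j; fin_cases i <;> fin_cases j <;> simp [pauli1, pauli2, pauli3, Matrix.mul_apply]

theorem pauli1_mul_pauli3 : pauli1 * pauli3 = -I • pauli2 := by
  ext i j; fin_cases i <;> fin_cases j <;> simp [pauli1, pauli2, pauli3, Matrix.mul_apply]

local notation "𝔸" => mulLeftAddMulRight ℂ pauli1 pauli2
local notation "𝔹" => mulLeftAddMulRight ℂ pauli2 pauli1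

theorem mulLeftAddMulRight_pauli_sq_add_sq_apply (X : Matrix (Fin 2) (Fin 2) ℂ) :
    (𝔸 * 𝔸 + 𝔹 * 𝔹) X = (4 : ℂ) • X + (2 : ℂ) • (pauli1 * X * pauli2 + pauli2 * X * pauli1) := by
  simp only [LinearMap.add_apply, mulLeftAddMulRight_mul_apply, pauli1_mul_pauli1,
    pauli2_mul_pauli2, Matrix.one_mul, Matrix.mul_one]
  module

theorem mulLeftAddMulRight_pauli_commutator :
    𝔸 * 𝔹 - 𝔹 * 𝔸 = (2 * I) • mulLeftAddMulRight ℂ pauli3 pauli3 := by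
  ext1 X
  simp only [LinearMap.sub_apply, LinearMap.smul_apply, mulLeftAddMulRight_mul_apply,
    mulLeftAddMulRight_apply, pauli1_mul_pauli2, pauli2_mul_pauli1, Matrix.smul_mul,
    Matrix.mul_smul, Matrix.neg_mul, Matrix.mul_neg]
  module

noncomputable def diracKron (ε' : ℂ) : Module.End ℂ (Fin 2 → Matrix (Fin 2) (Fin 2) ℂ) :=
  kronEnd pauli1 𝔸 + ε' • kronEnd pauli3 𝔹

theorem dirac_eq_smul_diracKron (ε' : ℂ) :
    Dirac ε' = ⇑((I / (2 * (√2 : ℂ))) • diracKron ε') := by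
  ext ψ β : 2
  simp only [Dirac, diracKron, LinearMap.smul_apply, LinearMap.add_apply, Pi.smul_apply,
    Pi.add_apply, kronEnd_apply, mulLeftAddMulRight_apply, Finset.smul_sum, smul_smul,
    ← Finset.sum_add_distrib, add_comm (ψ _ * pauli1)]

theorem diracKron_mul_self {ε' : ℂ} (hε' : ε' ^ 2 = 1) :
    diracKron ε' * diracKron ε' =
      kronEnd 1 (𝔸 * 𝔸 + 𝔹 * 𝔹) + (-2 * ε') • kronEnd pauli2 (mulLeftAddMulRight ℂ pauli3 pauli3) := by
  have square₁ : kronEnd pauli1 𝔸 * kronEnd pauli1 𝔸 = kronEnd 1 (𝔸 * 𝔸) := by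
    rw [kronEnd_mul, pauli1_mul_pauli1]
  have square₃ : kronEnd pauli3 𝔹 * kronEnd pauli3 𝔹 = kronEnd 1 (𝔹 * 𝔹) := by
    rw [kronEnd_mul, pauli3_mul_pauli3]
  have cross : kronEnd pauli1 𝔸 * kronEnd pauli3 𝔹 + kronEnd pauli3 𝔹 * kronEnd pauli1 𝔸 =
      (-2 : ℂ) • kronEnd pauli2 (mulLeftAddMulRight ℂ pauli3 pauli3) := by
    have commutator := congrArg (kronEnd pauli2) mulLeftAddMulRight_pauli_commutator
    rw [kronEnd_sub_right, kronEnd_smul_right] at commutator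
    rw [kronEnd_mul, kronEnd_mul, pauli3_mul_pauli1, pauli1_mul_pauli3, kronEnd_smul_left,
      kronEnd_smul_left]
    linear_combination (norm := match_scalars <;> simp [mul_left_comm I 2]) I • commutator
  rw [diracKron, mul_add, add_mul, add_mul, smul_mul_assoc, mul_smul_comm, smul_mul_assoc,
    mul_smul_comm, smul_smul, square₁, square₃, kronEnd_add_right]
  linear_combination (norm := module) ε' • cross + hε' • kronEnd 1 (𝔹 * 𝔹)

end Pauli

/-- `(D̸²ψ)_β = -(1/2)ψ_β - (1/4)(σ¹ψ_βσ² + σ²ψ_βσ¹)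
+ (ε'/4){σ³,ψ_α}(σ²)^α_β`. -/
theorem stmt17 (ε' : ℂ) (hε' : ε' = 1 ∨ ε' = -1)
    (ψ : Fin 2 → Matrix (Fin 2) (Fin 2) ℂ) (β : Fin 2) :
    Dirac ε' (Dirac ε' ψ) β =
      -((1 / 2 : ℂ) • ψ β)
        - (1 / 4 : ℂ) • (pauli1 * ψ β * pauli2 + pauli2 * ψ β * pauli1)
        + (ε' / 4) • ∑ α : Fin 2, (pauli2 α β) • (pauli3 * ψ α + ψ α * pauli3) := by
  have hε'_sq : ε' ^ 2 = 1 := by rcases hε' with rfl | rfl <;> norm_num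
  have hc : (I / (2 * (√2 : ℂ))) ^ 2 = -1 / 8 := by
    rw [div_pow, mul_pow, I_sq, ← ofReal_pow, Real.sq_sqrt zero_le_two]
    norm_num
  rw [dirac_eq_smul_diracKron, ← Module.End.mul_apply, smul_mul_smul_comm, ← sq, hc,
    diracKron_mul_self hε'_sq]
  simp only [LinearMap.smul_apply, LinearMap.add_apply, Pi.smul_apply, Pi.add_apply]
  rw [kronEnd_one_apply, mulLeftAddMulRight_pauli_sq_add_sq_apply]
  simp only [kronEnd_apply, mulLeftAddMulRight_apply]
  module
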